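/- arXiv:2312.12093 — 2 statements merged into one kernel-verified Lean document; each statement's English description precedes it below -/
import Mathlib

section
/- For bounded operators T₁, T₂ on a complex Hilbert space H, the numerical radius of the block operator [[T₂, −T₁],[T₁, T₂]] on H ⊕ H equals max{w(T₁ + iT₂), w(T₁ − iT₂)}. -/
noncomputable def numRadius {E : Type*} [NormedAddCommGroup E] [InnerProductSpace ℂ E]
    (T : E →L[ℂ] E) : ℝ :=
  sSup {r : ℝ | ∃ x : E, ‖x‖ = 1 ∧ r = ‖(inner ℂ (T x) x : ℂ)‖}

noncomputable def blockOp {H : Type*} [NormedAddCommGroup H] [InnerProductSpace ℂ H]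
    (n : ℕ) (M : Fin n → Fin n → H →L[ℂ] H) :
    (PiLp 2 fun _ : Fin n => H) →L[ℂ] (PiLp 2 fun _ : Fin n => H) :=
  (PiLp.continuousLinearEquiv 2 ℂ (fun _ : Fin n => H)).symm.toContinuousLinearMap ∘L
    (ContinuousLinearMap.pi fun i => ∑ j, (M i j).comp (ContinuousLinearMap.proj j)) ∘L
    (PiLp.continuousLinearEquiv 2 ℂ (fun _ : Fin n => H)).toContinuousLinearMap

/-!
The map `x ↦ (x₀ + i x₁, x₀ - i x₁)` is `√2` times a unitary of `H ⊕ H`, and it conjugates the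
block operator `M` to `diag(i (T₁ - iT₂), -i (T₁ + iT₂))`: with `u = x₀ + i x₁`, `v = x₀ - i x₁`,
`2 ⟪M x, x⟫ = -i (⟪(T₁ - iT₂) u, u⟫ - ⟪(T₁ + iT₂) v, v⟫)` and `‖u‖² + ‖v‖² = 2 ‖x‖²`.
The numerical radius of a diagonal operator is the maximum of those of its entries.
-/

variable {H : Type*} [NormedAddCommGroup H] [InnerProductSpace ℂ H]

open scoped InnerProductSpace

section NumericalRadius

variable {E : Type*} [NormedAddCommGroup E] [InnerProductSpace ℂ E]

lemma numRadius_nonneg (T : E →L[ℂ] E) : 0 ≤ numRadius T :=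
  Real.sSup_nonneg <| by rintro _ ⟨x, -, rfl⟩; exact norm_nonneg _

lemma numRadius_le_of_forall_norm_inner_le {T : E →L[ℂ] E} {c : ℝ} (hc : 0 ≤ c)
    (h : ∀ x, ‖⟪T x, x⟫_ℂ‖ ≤ ‖x‖ ^ 2 * c) : numRadius T ≤ c :=
  Real.sSup_le (by rintro _ ⟨x, hx, rfl⟩; simpa [hx] using h x) hc

lemma norm_inner_self_le_opNorm_mul_sq (T : E →L[ℂ] E) (x : E) :
    ‖⟪T x, x⟫_ℂ‖ ≤ ‖T‖ * ‖x‖ ^ 2 :=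
  calc ‖⟪T x, x⟫_ℂ‖ ≤ ‖T x‖ * ‖x‖ := norm_inner_le_norm _ _
    _ ≤ ‖T‖ * ‖x‖ * ‖x‖ := by gcongr; exact T.le_opNorm x
    _ = ‖T‖ * ‖x‖ ^ 2 := by ring

lemma norm_inner_self_le_numRadius_of_norm_eq_one (T : E →L[ℂ] E) {x : E} (hx : ‖x‖ = 1) :
    ‖⟪T x, x⟫_ℂ‖ ≤ numRadius T := by
  refine le_csSup ⟨‖T‖, ?_⟩ ⟨x, hx, rfl⟩
  rintro _ ⟨y, hy, rfl⟩
  simpa [hy] using norm_inner_self_le_opNorm_mul_sq T y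

lemma norm_inner_self_le_numRadius (T : E →L[ℂ] E) (x : E) :
    ‖⟪T x, x⟫_ℂ‖ ≤ ‖x‖ ^ 2 * numRadius T := by
  rcases eq_or_ne x 0 with rfl | hx
  · simp
  have hx' : ‖x‖ ≠ 0 := norm_ne_zero_iff.mpr hx
  have hunit : ‖(‖x‖⁻¹ : ℂ) • x‖ = 1 := by
    rw [norm_smul, norm_inv, Complex.norm_real, norm_norm, inv_mul_cancel₀ hx']
  have hscale : ⟪T ((‖x‖⁻¹ : ℂ) • x), (‖x‖⁻¹ : ℂ) • x⟫_ℂ = (‖x‖ ^ 2)⁻¹ * ⟪T x, x⟫_ℂ := by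
    rw [map_smul, inner_smul_left, inner_smul_right, ← mul_assoc, map_inv₀, Complex.conj_ofReal]
    push_cast; ring
  have := norm_inner_self_le_numRadius_of_norm_eq_one T hunit
  rw [hscale, norm_mul, Complex.norm_real, norm_inv, norm_pow, norm_norm,
    inv_mul_le_iff₀ (by positivity)] at this
  exact this

end NumericalRadius

lemma inner_blockOp_apply_self (n : ℕ) (M : Fin n → Fin n → H →L[ℂ] H)
    (x : PiLp 2 fun _ : Fin n => H) :
    ⟪blockOp n M x, x⟫_ℂ = ∑ i, ⟪∑ j, M i j (x j), x i⟫_ℂ := by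
  simp [blockOp, PiLp.inner_apply, sum_inner]

section RotationBlock

open Complex

lemma norm_add_I_smul_sq_add_norm_sub_I_smul_sq (x : PiLp 2 fun _ : Fin 2 => H) :
    ‖x 0 + I • x 1‖ ^ 2 + ‖x 0 - I • x 1‖ ^ 2 = 2 * ‖x‖ ^ 2 := by
  rw [parallelogram_law_with_norm ℂ, norm_smul, norm_I, one_mul, PiLp.norm_sq_eq_of_L2,
    Fin.sum_univ_two]

lemma two_mul_inner_rotationBlock_apply_self (T₁ T₂ : H →L[ℂ] H) (x : PiLp 2 fun _ : Fin 2 => H) :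
    2 * ⟪blockOp 2 !![T₂, -T₁; T₁, T₂] x, x⟫_ℂ =
      -I * (⟪(T₁ - I • T₂) (x 0 + I • x 1), x 0 + I • x 1⟫_ℂ -
        ⟪(T₁ + I • T₂) (x 0 - I • x 1), x 0 - I • x 1⟫_ℂ) := by
  rw [inner_blockOp_apply_self 2 !![T₂, -T₁; T₁, T₂]]
  simp only [Fin.sum_univ_two, Matrix.of_apply, Matrix.cons_val', Matrix.cons_val_zero,
    Matrix.cons_val_one, Matrix.empty_val', Matrix.cons_val_fin_one, add_apply, sub_apply,
    neg_apply, smul_apply, map_add, map_sub, map_smul, inner_add_left, inner_add_right,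
    inner_sub_left, inner_sub_right, inner_neg_left, inner_smul_left, inner_smul_right, conj_I]
  ring_nf
  simp only [I_sq, I_pow_four]
  ring

lemma two_mul_norm_inner_rotationBlock_apply_self (T₁ T₂ : H →L[ℂ] H)
    (x : PiLp 2 fun _ : Fin 2 => H) :
    2 * ‖⟪blockOp 2 !![T₂, -T₁; T₁, T₂] x, x⟫_ℂ‖ =
      ‖⟪(T₁ - I • T₂) (x 0 + I • x 1), x 0 + I • x 1⟫_ℂ -
        ⟪(T₁ + I • T₂) (x 0 - I • x 1), x 0 - I • x 1⟫_ℂ‖ := by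
  rw [← Complex.norm_two, ← norm_mul, two_mul_inner_rotationBlock_apply_self, norm_mul, norm_neg,
    norm_I, one_mul]

lemma exists_add_I_smul_eq_and_sub_I_smul_eq (u v : H) :
    ∃ x : PiLp 2 (fun _ : Fin 2 => H), x 0 + I • x 1 = u ∧ x 0 - I • x 1 = v := by
  refine ⟨!₂[(2⁻¹ : ℂ) • (u + v), (-2⁻¹ * I) • (u - v)], ?_, ?_⟩ <;>
  · simp only [Matrix.cons_val_zero, Matrix.cons_val_one, smul_smul]
    rw [show I * (-2⁻¹ * I) = 2⁻¹ by rw [mul_left_comm, I_mul_I]; ring]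
    module

lemma numRadius_rotationBlock_le (T₁ T₂ : H →L[ℂ] H) :
    numRadius (blockOp 2 !![T₂, -T₁; T₁, T₂]) ≤
      max (numRadius (T₁ + I • T₂)) (numRadius (T₁ - I • T₂)) := by
  set m := max (numRadius (T₁ + I • T₂)) (numRadius (T₁ - I • T₂))
  refine numRadius_le_of_forall_norm_inner_le
    ((numRadius_nonneg _).trans (le_max_left _ _)) fun x => ?_
  have hnorm := norm_add_I_smul_sq_add_norm_sub_I_smul_sq x
  set u := x 0 + I • x 1
  set v := x 0 - I • x 1
  suffices 2 * ‖⟪blockOp 2 !![T₂, -T₁; T₁, T₂] x, x⟫_ℂ‖ ≤ 2 * (‖x‖ ^ 2 * m) by linarith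
  calc 2 * ‖⟪blockOp 2 !![T₂, -T₁; T₁, T₂] x, x⟫_ℂ‖
      = ‖⟪(T₁ - I • T₂) u, u⟫_ℂ - ⟪(T₁ + I • T₂) v, v⟫_ℂ‖ :=
        two_mul_norm_inner_rotationBlock_apply_self T₁ T₂ x
    _ ≤ ‖⟪(T₁ - I • T₂) u, u⟫_ℂ‖ + ‖⟪(T₁ + I • T₂) v, v⟫_ℂ‖ := norm_sub_le _ _
    _ ≤ ‖u‖ ^ 2 * m + ‖v‖ ^ 2 * m := by
        gcongr
        · exact (norm_inner_self_le_numRadius _ u).trans (by gcongr; exact le_max_right _ _)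
        · exact (norm_inner_self_le_numRadius _ v).trans (by gcongr; exact le_max_left _ _)
    _ = 2 * (‖x‖ ^ 2 * m) := by rw [← add_mul, hnorm, mul_assoc]

lemma norm_inner_sub_inner_le_numRadius_rotationBlock (T₁ T₂ : H →L[ℂ] H) (u v : H) :
    ‖⟪(T₁ - I • T₂) u, u⟫_ℂ - ⟪(T₁ + I • T₂) v, v⟫_ℂ‖ ≤
      (‖u‖ ^ 2 + ‖v‖ ^ 2) * numRadius (blockOp 2 !![T₂, -T₁; T₁, T₂]) := by
  obtain ⟨x, rfl, rfl⟩ := exists_add_I_smul_eq_and_sub_I_smul_eq u v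
  calc _ = 2 * ‖⟪blockOp 2 !![T₂, -T₁; T₁, T₂] x, x⟫_ℂ‖ :=
        (two_mul_norm_inner_rotationBlock_apply_self T₁ T₂ x).symm
    _ ≤ 2 * (‖x‖ ^ 2 * numRadius (blockOp 2 !![T₂, -T₁; T₁, T₂])) := by
        gcongr; exact norm_inner_self_le_numRadius _ x
    _ = _ := by rw [norm_add_I_smul_sq_add_norm_sub_I_smul_sq]; ring

end RotationBlock

theorem stmt7 (T₁ T₂ : H →L[ℂ] H) :
    numRadius (blockOp 2 !![T₂, -T₁; T₁, T₂]) =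
      max (numRadius (T₁ + Complex.I • T₂)) (numRadius (T₁ - Complex.I • T₂)) := by
  refine le_antisymm (numRadius_rotationBlock_le T₁ T₂) (max_le ?_ ?_) <;>
    refine numRadius_le_of_forall_norm_inner_le (numRadius_nonneg _) fun u => ?_
  · simpa using (norm_sub_rev _ _).trans_le
      (norm_inner_sub_inner_le_numRadius_rotationBlock T₁ T₂ 0 u)
  · simpa using norm_inner_sub_inner_le_numRadius_rotationBlock T₁ T₂ u 0
end

section
/- For bounded operators T₁, T₂ on a complex Hilbert space H, the numerical radius of the block operator [[T₁, T₂],[T₂, iT₁]] on H ⊕ H is at most w(T₁) + w(T₂). -/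
namespace numRadius

variable {E : Type*} [NormedAddCommGroup E] [InnerProductSpace ℂ E]

theorem bddAbove (T : E →L[ℂ] E) :
    BddAbove {r : ℝ | ∃ x : E, ‖x‖ = 1 ∧ r = ‖(inner ℂ (T x) x : ℂ)‖} := by
  refine ⟨‖T‖, ?_⟩
  rintro r ⟨x, hx, rfl⟩
  calc ‖(inner ℂ (T x) x : ℂ)‖ ≤ ‖T x‖ * ‖x‖ := norm_inner_le_norm _ _
    _ ≤ ‖T‖ * ‖x‖ * ‖x‖ := by gcongr; exact T.le_opNorm x
    _ = ‖T‖ := by rw [hx, mul_one, mul_one]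

theorem norm_inner_le {T : E →L[ℂ] E} {x : E} (hx : ‖x‖ = 1) :
    ‖(inner ℂ (T x) x : ℂ)‖ ≤ numRadius T :=
  le_csSup (bddAbove T) ⟨x, hx, rfl⟩

theorem nonneg (T : E →L[ℂ] E) : 0 ≤ numRadius T :=
  Real.sSup_nonneg (by rintro r ⟨x, -, rfl⟩; exact norm_nonneg _)

theorem le_of_forall {T : E →L[ℂ] E} {c : ℝ} (hc : 0 ≤ c)
    (h : ∀ x : E, ‖x‖ = 1 → ‖(inner ℂ (T x) x : ℂ)‖ ≤ c) : numRadius T ≤ c :=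
  Real.sSup_le (by rintro r ⟨x, hx, rfl⟩; exact h x hx) hc

theorem norm_inner_smul_smul (T : E →L[ℂ] E) (c : ℂ) (z : E) :
    ‖(inner ℂ (T (c • z)) (c • z) : ℂ)‖ = ‖c‖ ^ 2 * ‖(inner ℂ (T z) z : ℂ)‖ := by
  rw [map_smul, inner_smul_left, inner_smul_right, norm_mul, norm_mul, Complex.norm_conj, sq,
    mul_assoc]

theorem norm_inner_le_mul_sq (T : E →L[ℂ] E) (z : E) :
    ‖(inner ℂ (T z) z : ℂ)‖ ≤ numRadius T * ‖z‖ ^ 2 := by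
  rcases eq_or_ne z 0 with rfl | hz
  · simp
  have hz' : 0 < ‖z‖ := norm_pos_iff.mpr hz
  have hunit : ‖(‖z‖⁻¹ : ℂ) • z‖ = 1 := by
    rw [norm_smul, norm_inv, Complex.norm_real, norm_norm, inv_mul_cancel₀ hz'.ne']
  have := norm_inner_le (T := T) hunit
  rw [norm_inner_smul_smul, norm_inv, Complex.norm_real, norm_norm, inv_pow,
    inv_mul_le_iff₀ (by positivity)] at this
  exact this.trans_eq (mul_comm _ _)

theorem norm_inner_add_inner_swap_le (T : E →L[ℂ] E) (x y : E) :
    ‖(inner ℂ (T x) y + inner ℂ (T y) x : ℂ)‖ ≤ numRadius T * (‖x‖ ^ 2 + ‖y‖ ^ 2) := by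
  have polarization : (inner ℂ (T (x + y)) (x + y) - inner ℂ (T (x - y)) (x - y) : ℂ)
      = 2 * (inner ℂ (T x) y + inner ℂ (T y) x) := by
    simp only [map_add, map_sub, inner_add_left, inner_add_right, inner_sub_left, inner_sub_right]
    ring
  have parallelogram : ‖x + y‖ ^ 2 + ‖x - y‖ ^ 2 = 2 * (‖x‖ ^ 2 + ‖y‖ ^ 2) := by
    simpa only [sq] using parallelogram_law_with_norm ℂ x y
  calc ‖(inner ℂ (T x) y + inner ℂ (T y) x : ℂ)‖
      = ‖(inner ℂ (T (x + y)) (x + y) - inner ℂ (T (x - y)) (x - y) : ℂ)‖ / 2 := by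
        rw [polarization, norm_mul, Complex.norm_two, mul_div_cancel_left₀ _ two_ne_zero]
    _ ≤ (numRadius T * ‖x + y‖ ^ 2 + numRadius T * ‖x - y‖ ^ 2) / 2 := by
        gcongr
        exact (norm_sub_le _ _).trans
          (add_le_add (norm_inner_le_mul_sq T _) (norm_inner_le_mul_sq T _))
    _ = numRadius T * (‖x‖ ^ 2 + ‖y‖ ^ 2) := by
        rw [← mul_add, parallelogram]; ring

end numRadius

theorem PiLp.norm_sq_fin_two {E : Type*} [NormedAddCommGroup E] (x : PiLp 2 fun _ : Fin 2 => E) :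
    ‖x‖ ^ 2 = ‖x 0‖ ^ 2 + ‖x 1‖ ^ 2 := by
  simp [PiLp.norm_sq_eq_of_L2, Fin.sum_univ_two]

section blockOp

variable {H : Type*} [NormedAddCommGroup H] [InnerProductSpace ℂ H]

/-- `M` is typed as a `Matrix` so that the lemma rewrites `blockOp n !![…]`: against a plain
function type the matrix literal fails the instance-transparency type check of `rw`/`simp`. -/
theorem blockOp_apply {n : ℕ} (M : Matrix (Fin n) (Fin n) (H →L[ℂ] H))
    (x : PiLp 2 fun _ : Fin n => H) (i : Fin n) : blockOp n M x i = ∑ j, M i j (x j) := by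
  simp [blockOp]

theorem inner_blockOp_two (A B C D : H →L[ℂ] H) (x : PiLp 2 fun _ : Fin 2 => H) :
    (inner ℂ (blockOp 2 !![A, B; C, D] x) x : ℂ) =
      inner ℂ (A (x 0)) (x 0) + inner ℂ (B (x 1)) (x 0) +
        (inner ℂ (C (x 0)) (x 1) + inner ℂ (D (x 1)) (x 1)) := by
  simp [PiLp.inner_apply, Fin.sum_univ_two, blockOp_apply, inner_add_left]

end blockOp

variable {H : Type*} [NormedAddCommGroup H] [InnerProductSpace ℂ H]
theorem stmt14 (T₁ T₂ : H →L[ℂ] H) :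
    numRadius (blockOp 2 !![T₁, T₂; T₂, Complex.I • T₁]) ≤
      numRadius T₁ + numRadius T₂ := by
  refine numRadius.le_of_forall (add_nonneg (numRadius.nonneg T₁) (numRadius.nonneg T₂))
    fun x hx => ?_
  have hsum : ‖x 0‖ ^ 2 + ‖x 1‖ ^ 2 = 1 := by rw [← PiLp.norm_sq_fin_two, hx, one_pow]
  have h₀ := numRadius.norm_inner_le_mul_sq T₁ (x 0)
  have h₁ := numRadius.norm_inner_le_mul_sq T₁ (x 1)
  have h₂ := numRadius.norm_inner_add_inner_swap_le T₂ (x 1) (x 0)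
  rw [inner_blockOp_two, smul_apply, inner_smul_left]
  set a := (inner ℂ (T₁ (x 0)) (x 0) : ℂ)
  set b := (inner ℂ (T₁ (x 1)) (x 1) : ℂ)
  set c := (inner ℂ (T₂ (x 1)) (x 0) + inner ℂ (T₂ (x 0)) (x 1) : ℂ)
  calc ‖_ + _ + (_ + starRingEnd ℂ Complex.I * b)‖ = ‖a + starRingEnd ℂ Complex.I * b + c‖ := by
        congr 1; simp only [c]; ring
    _ ≤ ‖a‖ + ‖b‖ + ‖c‖ := by simpa using norm_add₃_le (a := a) (b := starRingEnd ℂ Complex.I * b)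
    _ ≤ numRadius T₁ * (‖x 0‖ ^ 2 + ‖x 1‖ ^ 2) + numRadius T₂ * (‖x 1‖ ^ 2 + ‖x 0‖ ^ 2) := by
        linarith
    _ = numRadius T₁ + numRadius T₂ := by rw [add_comm (‖x 1‖ ^ 2), hsum, mul_one, mul_one]
end
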